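/- arXiv:1608.04338 — 4 statements merged into one kernel-verified Lean document; each statement's English description precedes it below -/
import Mathlib

section
/- Let σ be the K-algebra automorphism of the rational function field RatFunc K determined by σ(X) = ζ·X. Then σ has order n in the group of K-algebra automorphisms of RatFunc K, and the fixed field of the cyclic subgroup generated by σ equals the intermediate field K⟮X^n⟯ generated over K by X^n; in particular the field extension RatFunc K over K⟮X^n⟯ has degree n. -/
/-!
If `σ X = ζ X` then `σ ^ k` sends `X` to `ζ ^ k X`, and a `K`-automorphism of `K(X)` is determined
by the image of `X`; hence `σ` has the order of `ζ`, namely `n`. Since `Xⁿ` is `σ`-invariant,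
`K(Xⁿ)` lies in the fixed field of `⟨σ⟩`, which has index `n` by Artin's theorem. On the other hand
`[K(X) : K(f)] = max (deg num f) (deg denom f)` gives `[K(X) : K(Xⁿ)] = n`, so the two fields
coincide.
-/

open RatFunc IntermediateField Module Polynomial
open scoped nonZeroDivisors

theorem IntermediateField.finrank_fixedField_eq_card_of_finite {F E : Type*} [Field F] [Field E]
    [Algebra F E] (H : Subgroup Gal(E/F)) [Finite H] :
    finrank (fixedField H) E = Nat.card H := by
  have := Fintype.ofFinite H
  rw [Nat.card_eq_fintype_card]
  exact FixedPoints.finrank_eq_card H E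

namespace RatFunc

variable {K : Type*} [Field K]

theorem algHom_ext {L : Type*} [CommRing L] [Algebra K L] {φ₁ φ₂ : K⟮X⟯ →ₐ[K] L}
    (h : φ₁ X = φ₂ X) : φ₁ = φ₂ :=
  AlgHom.coe_ringHom_injective <| IsLocalization.ringHom_ext K[X]⁰ <|
    Polynomial.ringHom_ext (fun a => by simp [← algebraMap_eq_C]) (by simpa using h)

theorem algEquiv_pow_apply_X {σ : K⟮X⟯ ≃ₐ[K] K⟮X⟯} {c : K} (hσ : σ X = C c * X) (k : ℕ) :
    (σ ^ k) X = C (c ^ k) * X := by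
  induction k with
  | zero => simp
  | succ k ih =>
    rw [pow_succ, AlgEquiv.mul_apply, hσ, map_mul, ih, ← algebraMap_eq_C, AlgEquiv.commutes,
      pow_succ, map_mul]
    ring

theorem algEquiv_pow_eq_one_iff {σ : K⟮X⟯ ≃ₐ[K] K⟮X⟯} {c : K} (hσ : σ X = C c * X) (k : ℕ) :
    σ ^ k = 1 ↔ c ^ k = 1 := by
  calc σ ^ k = 1 ↔ (σ ^ k) X = X :=
        ⟨fun h => by rw [h, AlgEquiv.one_apply],
          fun h => AlgEquiv.coe_toAlgHom_injective (algHom_ext h)⟩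
    _ ↔ C (c ^ k) = 1 := by
        rw [algEquiv_pow_apply_X hσ, mul_eq_right₀ X_ne_zero]
    _ ↔ c ^ k = 1 := by rw [← map_one C, C_injective.eq_iff]

theorem orderOf_algEquiv_eq_orderOf {σ : K⟮X⟯ ≃ₐ[K] K⟮X⟯} {c : K} (hσ : σ X = C c * X) :
    orderOf σ = orderOf c :=
  orderOf_eq_orderOf_iff.mpr (algEquiv_pow_eq_one_iff hσ)

theorem finrank_adjoin_X_pow (n : ℕ) : finrank K⟮(X : K⟮X⟯) ^ n⟯ K⟮X⟯ = n := by
  rw [finrank_eq_max_natDegree, ← algebraMap_X, ← map_pow, num_algebraMap, denom_algebraMap]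
  simp

theorem X_pow_mem_fixedField_zpowers {n : ℕ} {ζ : K} (hζ : ζ ^ n = 1) {σ : K⟮X⟯ ≃ₐ[K] K⟮X⟯}
    (hσ : σ X = C ζ * X) :
    (X : K⟮X⟯) ^ n ∈ fixedField (Subgroup.zpowers σ) := by
  have hσX : σ ∈ MulAction.stabilizer Gal(K⟮X⟯/K) ((X : K⟮X⟯) ^ n) := by
    rw [MulAction.mem_stabilizer_iff, AlgEquiv.smul_def, map_pow, hσ, mul_pow, ← map_pow, hζ,
      map_one, one_mul]
  exact (mem_fixedField_iff _ _).mpr fun g hg => Subgroup.zpowers_le.mpr hσX hg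

end RatFunc

/-- Let `K` be a field, `n` a positive integer and `ζ ∈ K` a primitive
`n`-th root of unity.  Let `σ` be the `K`-algebra automorphism of `RatFunc K` determined by
`σ(X) = ζ·X`.  Then `σ` has order `n`, the fixed field of the cyclic subgroup generated by
`σ` is `K⟮Xⁿ⟯`, and `[RatFunc K : K⟮Xⁿ⟯] = n`. -/
theorem stmt_0 (K : Type) [Field K] (n : ℕ) (hn : 0 < n) (ζ : K)
    (hζ : IsPrimitiveRoot ζ n)
    (σ : RatFunc K ≃ₐ[K] RatFunc K)
    (hσ : σ RatFunc.X = RatFunc.C ζ * RatFunc.X) :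
    orderOf σ = n ∧
    IntermediateField.fixedField (Subgroup.zpowers σ) =
      IntermediateField.adjoin K {(RatFunc.X : RatFunc K) ^ n} ∧
    Module.finrank (IntermediateField.adjoin K {(RatFunc.X : RatFunc K) ^ n}) (RatFunc K) = n := by
  have horder : orderOf σ = n := by rw [orderOf_algEquiv_eq_orderOf hσ, ← hζ.eq_orderOf]
  have : Finite (Subgroup.zpowers σ) := (orderOf_pos_iff.mp (horder ▸ hn)).finite_zpowers
  have : FiniteDimensional K⟮(X : K⟮X⟯) ^ n⟯ K⟮X⟯ :=
    Module.finite_of_finrank_pos (by rwa [finrank_adjoin_X_pow])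
  have hle : K⟮(X : K⟮X⟯) ^ n⟯ ≤ fixedField (Subgroup.zpowers σ) :=
    adjoin_simple_le_iff.mpr (X_pow_mem_fixedField_zpowers hζ.pow_eq_one hσ)
  have heq := eq_of_le_of_finrank_eq' hle (by
    rw [finrank_adjoin_X_pow, finrank_fixedField_eq_card_of_finite, Nat.card_zpowers, horder])
  exact ⟨horder, heq.symm, finrank_adjoin_X_pow n⟩
end

section
/- Let τ be the K-algebra automorphism of the rational function field RatFunc K determined by τ(X) = (u·X + s·v)/(v·X + u). Then τ has order n in the group of K-algebra automorphisms of RatFunc K, and the fixed field of the cyclic subgroup generated by τ equals the intermediate field K⟮h⟯ generated over K by h = (X − i)^n/(X + i)^n; this intermediate field also equals K⟮z⟯ where z = i·((X + i)^n − (X − i)^n)/((X + i)^n + (X − i)^n). -/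
/-!
The Cayley transform `W = (X - i) / (X + i)` generates `K(X)` and conjugates `τ` to the scaling
`W ↦ ζ W` with `ζ = (u - i v) / (u + i v)`, because `u X + s v ± i (v X + u) = (u ± i v) (X ± i)`.
Hence `τ` has the order `n` of `ζ`. The fixed field of `⟨τ⟩` contains `h = Wⁿ` and has index `n`
by Artin's theorem, while `[K(X) : K(h)] ≤ n` since `W` is a root of `Yⁿ - h`; so it is `K(h)`.
Finally `z = i (1 - h) / (1 + h)` is a Möbius transform of `h`, so `K(z) = K(h)`.
-/

open IntermediateField

section FieldExtension

variable {F L : Type*} [Field F] [Field L] [Algebra F L]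

theorem IntermediateField.adjoin_simple_mobius {f : L} {a b c d : F} (hdet : a * d - b * c ≠ 0)
    (hden : algebraMap F L c * f + algebraMap F L d ≠ 0) :
    F⟮(algebraMap F L a * f + algebraMap F L b) / (algebraMap F L c * f + algebraMap F L d)⟯ =
      F⟮f⟯ := by
  set g := (algebraMap F L a * f + algebraMap F L b) / (algebraMap F L c * f + algebraMap F L d)
  have hdet' : algebraMap F L (a * d - b * c) ≠ 0 := (map_ne_zero _).mpr hdet
  have hden_inv : algebraMap F L a - algebraMap F L c * g =
      algebraMap F L (a * d - b * c) / (algebraMap F L c * f + algebraMap F L d) := by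
    simp only [g, map_sub, map_mul]; field_simp; ring
  have hnum : algebraMap F L d * g - algebraMap F L b =
      algebraMap F L (a * d - b * c) * f / (algebraMap F L c * f + algebraMap F L d) := by
    rw [eq_div_iff hden, sub_mul, mul_assoc, div_mul_cancel₀ _ hden, map_sub, map_mul, map_mul]
    ring
  have hinv : f = (algebraMap F L d * g - algebraMap F L b) /
      (algebraMap F L a - algebraMap F L c * g) := by
    rw [hnum, hden_inv, div_div_div_cancel_right₀ hden, mul_div_cancel_left₀ f hdet']
  refine le_antisymm (adjoin_simple_le_iff.mpr ?_) (adjoin_simple_le_iff.mpr ?_)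
  · have hf := mem_adjoin_simple_self F f
    exact div_mem (add_mem (mul_mem (algebraMap_mem _ a) hf) (algebraMap_mem _ b))
      (add_mem (mul_mem (algebraMap_mem _ c) hf) (algebraMap_mem _ d))
  · have hg := mem_adjoin_simple_self F g
    rw [hinv]
    exact div_mem (sub_mem (mul_mem (algebraMap_mem _ d) hg) (algebraMap_mem _ b))
      (sub_mem (algebraMap_mem _ a) (mul_mem (algebraMap_mem _ c) hg))

theorem IntermediateField.adjoin_simple_div_eq_adjoin_simple_cayley {A B : L} {i : F}
    (hA : A ≠ 0) (hAB : A + B ≠ 0) (hi : 2 * i ≠ 0) :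
    F⟮B / A⟯ = F⟮algebraMap F L i * (A - B) / (A + B)⟯ := by
  have hden : algebraMap F L 1 * (B / A) + algebraMap F L 1 = (A + B) / A := by
    rw [map_one, one_mul, div_add_one hA, add_comm]
  have hnum : algebraMap F L (-i) * (B / A) + algebraMap F L i =
      algebraMap F L i * (A - B) / A := by
    rw [map_neg]; field_simp; ring
  have hz : algebraMap F L i * (A - B) / (A + B) =
      (algebraMap F L (-i) * (B / A) + algebraMap F L i) /
        (algebraMap F L 1 * (B / A) + algebraMap F L 1) := by
    rw [hnum, hden, div_div_div_cancel_right₀ hA]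
  rw [hz, adjoin_simple_mobius]
  · rwa [show -i * 1 - i * 1 = -(2 * i) by ring, neg_ne_zero]
  · rw [hden]; exact div_ne_zero hAB hA

theorem IntermediateField.adjoin_simple_eq_top_of_adjoin_simple_eq_top {α : L} (h : F⟮α⟯ = ⊤)
    (E : IntermediateField F L) : E⟮α⟯ = ⊤ := by
  rw [← restrictScalars_eq_top_iff (K := F), restrictScalars_adjoin, eq_top_iff, ← h]
  exact adjoin.mono _ _ _ Set.subset_union_right

theorem minpoly.natDegree_le_of_pow_eq_algebraMap {α : L} {n : ℕ} (hn : 0 < n) {a : F}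
    (ha : α ^ n = algebraMap F L a) : (minpoly F α).natDegree ≤ n := by
  have hroot : Polynomial.aeval α (Polynomial.X ^ n - Polynomial.C a) = 0 := by
    simp [ha]
  have := minpoly.degree_le_of_ne_zero F α (Polynomial.X_pow_sub_C_ne_zero hn a) hroot
  simpa [Polynomial.natDegree_X_pow_sub_C] using Polynomial.natDegree_le_natDegree this

theorem IntermediateField.adjoin_simple_le_fixedField_zpowers {σ : L ≃ₐ[F] L} {β : L}
    (h : σ β = β) :
    F⟮β⟯ ≤ fixedField (Subgroup.zpowers σ) := by
  have hstab : Subgroup.zpowers σ ≤ MulAction.stabilizer (L ≃ₐ[F] L) β :=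
    Subgroup.zpowers_le.mpr (MulAction.mem_stabilizer_iff.mpr h)
  rw [adjoin_simple_le_iff, mem_fixedField_iff]
  exact fun τ hτ ↦ MulAction.mem_stabilizer_iff.mp (hstab hτ)

theorem AlgEquiv.pow_apply_eq_mul {σ : L ≃ₐ[F] L} {α : L} {c : F}
    (hσ : σ α = algebraMap F L c * α) (m : ℕ) : (σ ^ m) α = algebraMap F L (c ^ m) * α := by
  induction m with
  | zero => simp
  | succ m ih => rw [pow_succ', AlgEquiv.mul_apply, ih, map_mul, AlgEquiv.commutes, hσ,
      pow_succ', map_mul, mul_left_comm, mul_assoc]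

theorem AlgEquiv.orderOf_eq_of_apply_eq_mul {σ : L ≃ₐ[F] L} {α : L} (hgen : F⟮α⟯ = ⊤)
    (hα : α ≠ 0) {c : F} (hσ : σ α = algebraMap F L c * α) : orderOf σ = orderOf c := by
  refine orderOf_eq_orderOf_iff.mpr fun m ↦ ⟨fun h ↦ ?_, fun h ↦ ?_⟩
  · have := AlgEquiv.pow_apply_eq_mul hσ m
    rw [h, AlgEquiv.one_apply] at this
    exact (algebraMap F L).injective (by
      rw [map_one]; exact (mul_eq_right₀ hα).mp this.symm)
  · have hfix : (σ ^ m) α = α := by rw [AlgEquiv.pow_apply_eq_mul hσ, h, map_one, one_mul]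
    have := adjoin_simple_le_fixedField_zpowers hfix
    rwa [hgen, le_iff_le, fixingSubgroup_top, le_bot_iff, Subgroup.zpowers_eq_bot] at this

theorem IntermediateField.fixedField_zpowers_eq_adjoin_pow {σ : L ≃ₐ[F] L} {α : L} (hgen : F⟮α⟯ = ⊤)
    (hα : α ≠ 0) {c : F} (hσ : σ α = algebraMap F L c * α) (hc : 0 < orderOf c) :
    fixedField (Subgroup.zpowers σ) = F⟮α ^ orderOf c⟯ := by
  set n := orderOf c
  set E := F⟮α ^ n⟯
  have hfix : σ (α ^ n) = α ^ n := by
    rw [map_pow, hσ, mul_pow, ← map_pow, pow_orderOf_eq_one, map_one, one_mul]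
  have hint : IsIntegral E α :=
    IsIntegral.of_pow hc (isIntegral_algebraMap (x := (⟨α ^ n, mem_adjoin_simple_self F _⟩ : E)))
  have hrank : Module.finrank E L = (minpoly E α).natDegree := by
    rw [← finrank_top', ← adjoin_simple_eq_top_of_adjoin_simple_eq_top hgen E, adjoin.finrank hint]
  have : FiniteDimensional E L := Module.finite_of_finrank_pos (hrank ▸ minpoly.natDegree_pos hint)
  have hσfin : 0 < orderOf σ := (AlgEquiv.orderOf_eq_of_apply_eq_mul hgen hα hσ).symm ▸ hc
  have : Fintype (Subgroup.zpowers σ) :=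
    @Fintype.ofFinite _ (orderOf_pos_iff.mp hσfin).finite_zpowers.to_subtype
  have hrank_fixed : Module.finrank (fixedField (Subgroup.zpowers σ)) L = n := by
    refine (FixedPoints.finrank_eq_card (Subgroup.zpowers σ) L).trans ?_
    rw [← Nat.card_eq_fintype_card, Nat.card_zpowers,
      AlgEquiv.orderOf_eq_of_apply_eq_mul hgen hα hσ]
  refine (eq_of_le_of_finrank_le' (adjoin_simple_le_fixedField_zpowers hfix) ?_).symm
  rw [hrank, hrank_fixed]
  exact minpoly.natDegree_le_of_pow_eq_algebraMap hc (a := ⟨α ^ n, mem_adjoin_simple_self F _⟩) rfl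

theorem AlgEquiv.map_cayley_of_map_eq_mobius (σ : L ≃ₐ[F] L) {x : L} (hx : x ≠ 0)
    {s i u v : F} (hi : i ^ 2 = s)
    (hσ : σ x = (algebraMap F L u * x + algebraMap F L (s * v)) /
      (algebraMap F L v * x + algebraMap F L u)) :
    σ ((x - algebraMap F L i) / (x + algebraMap F L i)) =
      algebraMap F L ((u - i * v) / (u + i * v)) *
        ((x - algebraMap F L i) / (x + algebraMap F L i)) := by
  have hden : algebraMap F L v * x + algebraMap F L u ≠ 0 := fun h ↦ by
    rw [h, div_zero, map_eq_zero_iff _ σ.injective] at hσ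
    exact hx hσ
  have hplus : σ (x + algebraMap F L i) =
      algebraMap F L (u + i * v) * (x + algebraMap F L i) /
        (algebraMap F L v * x + algebraMap F L u) := by
    rw [map_add, hσ, AlgEquiv.commutes, div_add' _ _ _ hden, ← hi]
    simp only [map_add, map_mul, map_pow]
    ring
  have hminus : σ (x - algebraMap F L i) =
      algebraMap F L (u - i * v) * (x - algebraMap F L i) /
        (algebraMap F L v * x + algebraMap F L u) := by
    rw [map_sub, hσ, AlgEquiv.commutes, div_sub' hden, ← hi]
    simp only [map_sub, map_mul, map_pow]
    ring
  rw [map_div₀, hplus, hminus, div_div_div_cancel_right₀ hden, mul_div_mul_comm, map_div₀]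

end FieldExtension

namespace RatFunc

variable {K : Type*} [Field K]

theorem X_add_algebraMap_ne_zero (j : K) : (X : K⟮X⟯) + algebraMap K _ j ≠ 0 := by
  simpa using algebraMap_ne_zero (Polynomial.X_add_C_ne_zero j)

theorem X_sub_algebraMap_ne_zero (j : K) : (X : K⟮X⟯) - algebraMap K _ j ≠ 0 := by
  simpa [sub_eq_add_neg] using X_add_algebraMap_ne_zero (-j)

theorem adjoin_cayley_eq_top {i : K} (hi : 2 * i ≠ 0) :
    K⟮((X : K⟮X⟯) - algebraMap K _ i) / (X + algebraMap K _ i)⟯ = ⊤ := by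
  have hmobius : ((X : K⟮X⟯) - algebraMap K _ i) / (X + algebraMap K _ i) =
      (algebraMap K _ 1 * X + algebraMap K _ (-i)) / (algebraMap K _ 1 * X + algebraMap K _ i) := by
    simp [sub_eq_add_neg]
  rw [hmobius, adjoin_simple_mobius (by rwa [show (1 : K) * i - -i * 1 = 2 * i by ring])
    (by simpa using X_add_algebraMap_ne_zero i), adjoin_X]

theorem add_pow_add_sub_pow_ne_zero {i : K} (hi : 2 * i ≠ 0) {n : ℕ} (hn : n ≠ 0) :
    ((X : K⟮X⟯) + algebraMap K _ i) ^ n + (X - algebraMap K _ i) ^ n ≠ 0 := by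
  have hP : ((Polynomial.X + Polynomial.C i) ^ n + (Polynomial.X - Polynomial.C i) ^ n :
      Polynomial K) ≠ 0 := fun h ↦ by
    have := congrArg (Polynomial.eval i) h
    simp only [Polynomial.eval_add, Polynomial.eval_sub, Polynomial.eval_pow, Polynomial.eval_X,
      Polynomial.eval_C, Polynomial.eval_zero, sub_self, zero_pow hn, add_zero, ← two_mul] at this
    exact hi (eq_zero_of_pow_eq_zero this)
  simpa using algebraMap_ne_zero hP

end RatFunc

open RatFunc

theorem stmt_1_general (K : Type) [Field K] (hchar : ringChar K ≠ 2)
    (s : K) (hs : s ≠ 0) (i : K) (hi : i ^ 2 = s)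
    (u v : K)
    (n : ℕ) (hn : 1 ≤ n)
    (hprim : IsPrimitiveRoot ((u - i * v) / (u + i * v)) n)
    (τ : RatFunc K ≃ₐ[K] RatFunc K)
    (hτ : τ RatFunc.X =
      (RatFunc.C u * RatFunc.X + RatFunc.C (s * v)) / (RatFunc.C v * RatFunc.X + RatFunc.C u)) :
    orderOf τ = n ∧
    IntermediateField.fixedField (Subgroup.zpowers τ) =
      IntermediateField.adjoin K
        {((RatFunc.X - RatFunc.C i) ^ n / (RatFunc.X + RatFunc.C i) ^ n : RatFunc K)} ∧
    IntermediateField.adjoin K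
        {((RatFunc.X - RatFunc.C i) ^ n / (RatFunc.X + RatFunc.C i) ^ n : RatFunc K)} =
      IntermediateField.adjoin K
        {(RatFunc.C i * ((RatFunc.X + RatFunc.C i) ^ n - (RatFunc.X - RatFunc.C i) ^ n) /
          ((RatFunc.X + RatFunc.C i) ^ n + (RatFunc.X - RatFunc.C i) ^ n) : RatFunc K)} := by
  have h2i : (2 : K) * i ≠ 0 := mul_ne_zero (Ring.two_ne_zero hchar) <| by
    rintro rfl; exact hs (by rw [← hi, zero_pow two_ne_zero])
  rw [← algebraMap_eq_C] at hτ ⊢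
  have hW := div_ne_zero (X_sub_algebraMap_ne_zero i) (X_add_algebraMap_ne_zero i)
  have hgen := adjoin_cayley_eq_top h2i
  have hτW := τ.map_cayley_of_map_eq_mobius X_ne_zero hi hτ
  have horder : orderOf ((u - i * v) / (u + i * v)) = n := hprim.eq_orderOf.symm
  have hfix := fixedField_zpowers_eq_adjoin_pow hgen hW hτW (horder ▸ hn)
  rw [horder, div_pow] at hfix
  refine ⟨horder ▸ τ.orderOf_eq_of_apply_eq_mul hgen hW hτW, hfix, ?_⟩
  exact adjoin_simple_div_eq_adjoin_simple_cayley (pow_ne_zero _ (X_add_algebraMap_ne_zero i))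
    (add_pow_add_sub_pow_ne_zero h2i (by omega)) h2i

/-- Let `K` be a field of characteristic `≠ 2`, `s ∈ K` nonzero, `i² = s`,
`u, v ∈ K` with `u² − s·v² ≠ 0`, and suppose `(u − i·v)/(u + i·v)` is a primitive `n`-th root
of unity.  Let `τ` be the `K`-automorphism of `RatFunc K` with `τ(X) = (uX + sv)/(vX + u)`.
Then `τ` has order `n`, the fixed field of `⟨τ⟩` is `K⟮h⟯` with
`h = (X − i)ⁿ/(X + i)ⁿ`, and this field also equals `K⟮z⟯` where
`z = i·((X + i)ⁿ − (X − i)ⁿ)/((X + i)ⁿ + (X − i)ⁿ)`. -/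
theorem stmt_1 (K : Type) [Field K] (hchar : ringChar K ≠ 2)
    (s : K) (hs : s ≠ 0) (i : K) (hi : i ^ 2 = s)
    (u v : K) (huv : u ^ 2 - s * v ^ 2 ≠ 0)
    (n : ℕ) (hn : 1 ≤ n)
    (hprim : IsPrimitiveRoot ((u - i * v) / (u + i * v)) n)
    (τ : RatFunc K ≃ₐ[K] RatFunc K)
    (hτ : τ RatFunc.X =
      (RatFunc.C u * RatFunc.X + RatFunc.C (s * v)) / (RatFunc.C v * RatFunc.X + RatFunc.C u)) :
    orderOf τ = n ∧
    IntermediateField.fixedField (Subgroup.zpowers τ) =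
      IntermediateField.adjoin K
        {((RatFunc.X - RatFunc.C i) ^ n / (RatFunc.X + RatFunc.C i) ^ n : RatFunc K)} ∧
    IntermediateField.adjoin K
        {((RatFunc.X - RatFunc.C i) ^ n / (RatFunc.X + RatFunc.C i) ^ n : RatFunc K)} =
      IntermediateField.adjoin K
        {(RatFunc.C i * ((RatFunc.X + RatFunc.C i) ^ n - (RatFunc.X - RatFunc.C i) ^ n) /
          ((RatFunc.X + RatFunc.C i) ^ n + (RatFunc.X - RatFunc.C i) ^ n) : RatFunc K)} :=
  stmt_1_general K hchar s hs i hi u v n hn hprim τ hτ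
end

section
/- Let H be a subgroup of GL(2, F_q) containing all scalar matrices, whose image C in PGL(2, F_q) under the quotient map has order n with gcd(n, p) = 1. (i) If there exists a nonzero vector v ∈ F_q² which is a common eigenvector of all elements of H (i.e., for every g ∈ H there is c ∈ F_q with g·v = c·v), then C is a cyclic group and n divides q − 1. (ii) If no nonzero vector of F_q² is a common eigenvector of all elements of H, but there exists a nonzero vector w ∈ L² which is a common eigenvector of all elements of H regarded as matrices over L, then n divides q + 1. -/
/-!
A common eigenvector `w` of `H` gives an eigenvalue character `c : H →* Kˣ`. We compose it with a
character `χ` whose kernel is exactly `H ∩ Z(GL₂)`, so that the image of `H` in `PGL(2, F_q)` is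
isomorphic to a subgroup of the cyclic group `Kˣ`.

(i) Here `K = F_q` and `χ = c² / det` is the ratio of the two eigenvalues. If `χ g = 1`, then
`g = c (1 + N)` with `N² = 0`; as `gⁿ` is scalar and `p ∤ n`, this forces `N = 0`. So `n ∣ q - 1`.

(ii) Here `K = L` and `χ = c^(q-1) = σ c / c` for the Frobenius `σ` of `L / F_q`. Since no
`F_q`-line is stable under `H`, the eigenvectors `w` and `σ w` are independent, and `g` acts on them
by `c` and `σ c`; so `χ g = 1` forces `g` to be scalar. The values of `χ` are `(q-1)`-th powers in
`Lˣ`, a group of order `q² - 1`, hence `n ∣ q + 1`.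
-/

open Matrix

theorem one_add_pow_of_sq_eq_zero {R : Type*} [Semiring R] {M : R} (hM : M ^ 2 = 0) (k : ℕ) :
    (1 + M) ^ k = 1 + k • M := by
  induction k with
  | zero => simp
  | succ k ih =>
    rw [sq] at hM
    rw [pow_succ, ih]
    simp only [mul_add, add_mul, mul_one, one_mul, smul_mul_assoc, hM, smul_zero, add_zero,
      succ_nsmul, add_assoc]

noncomputable def QuotientGroup.mapMkEquivRange {G A : Type*} [Group G] [Group A]
    (N : Subgroup G) [N.Normal] (H : Subgroup G) (χ : H →* A)
    (hχ : ∀ g : H, (g : G) ∈ N ↔ χ g = 1) : H.map (QuotientGroup.mk' N) ≃* χ.range :=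
  have hker : ((QuotientGroup.mk' N).comp H.subtype).ker = χ.ker := by
    ext g
    simp [hχ]
  (MulEquiv.subgroupCongr (by rw [MonoidHom.range_comp, Subgroup.range_subtype])).trans <|
    (QuotientGroup.quotientKerEquivRange _).symm.trans <|
      (QuotientGroup.quotientMulEquivOfEq hker).trans (QuotientGroup.quotientKerEquivRange χ)

theorem Subgroup.pow_card_map_mk'_mem {G : Type*} [Group G] (N : Subgroup G) [N.Normal]
    {H : Subgroup G} {g : G} (hg : g ∈ H) : g ^ Nat.card (H.map (QuotientGroup.mk' N)) ∈ N := by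
  have := congrArg Subtype.val
    (pow_card_eq_one' (G := H.map (QuotientGroup.mk' N)) (x := ⟨_, Subgroup.mem_map_of_mem _ hg⟩))
  simpa [← QuotientGroup.mk_pow, QuotientGroup.eq_one_iff] using this

theorem FiniteField.mem_range_algebraMap_of_pow_card_eq {F L : Type*} [Field F] [Fintype F]
    [Field L] [Algebra F L] [Finite L] {x : L} (hx : x ^ Fintype.card F = x) :
    x ∈ Set.range (algebraMap F L) := by
  rw [IsGalois.mem_range_algebraMap_iff_fixed]
  intro f
  obtain ⟨k, rfl⟩ := (bijective_frobeniusAlgEquivOfAlgebraic_pow F L).2 f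
  simpa [AlgEquiv.coe_pow] using
    Function.iterate_fixed (f := frobeniusAlgEquivOfAlgebraic F L) hx k

namespace Matrix

theorem map_smul_one {ι R S : Type*} [DecidableEq ι] [Semiring R] [Semiring S] (f : R →+* S)
    (a : R) : (a • (1 : Matrix ι ι R)).map f = f a • 1 := by
  rw [map_smul' _ _ _ (map_mul f), Matrix.map_one _ (map_zero f) (map_one f)]

variable {ι K : Type*} [Fintype ι] [Field K]

theorem mulVec_comp_algHom {F L : Type*} [CommSemiring F] [CommSemiring L] [Algebra F L]
    (σ : L →ₐ[F] L) {A : Matrix ι ι F} {w : ι → L} {c : L}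
    (hA : A.map (algebraMap F L) *ᵥ w = c • w) :
    A.map (algebraMap F L) *ᵥ (σ ∘ w) = σ c • (σ ∘ w) := by
  have hσ : ⇑σ ∘ ⇑(algebraMap F L) = algebraMap F L := funext σ.commutes
  ext i
  simpa [hA, Matrix.map_map, hσ] using
    (RingHom.map_mulVec (σ : L →+* L) (A.map (algebraMap F L)) w i).symm

theorem exists_mulVec_eq_smul_of_map {F : Type*} [Field F] (f : F →+* K) {A : Matrix ι ι F}
    {v : ι → F} (hv : v ≠ 0) {c : K} (hA : A.map f *ᵥ (f ∘ v) = c • (f ∘ v)) :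
    ∃ c' : F, A *ᵥ v = c' • v := by
  obtain ⟨i, hi⟩ : ∃ i, v i ≠ 0 := Function.ne_iff.mp hv
  have hcoord : ∀ j, f ((A *ᵥ v) j) = c * f (v j) := fun j => by
    simpa using (RingHom.map_mulVec f A v j).trans (congrFun hA j)
  have hc : c = f ((A *ᵥ v) i / v i) := by
    rw [map_div₀, hcoord, mul_div_cancel_right₀ _ ((map_ne_zero f).mpr hi)]
  exact ⟨(A *ᵥ v) i / v i, funext fun j => f.injective <| by simp [hcoord, ← hc]⟩

variable [DecidableEq ι]

theorem GeneralLinearGroup.mem_center_iff_exists_eq_smul_one {g : GL ι K} :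
    g ∈ Subgroup.center (GL ι K) ↔ ∃ a : K, (g : Matrix ι ι K) = a • 1 := by
  simp [GeneralLinearGroup.mem_center_iff_val_mem_range_scalar, smul_one_eq_diagonal, eq_comm]

theorem exists_eigencharacter {G : Type*} [Group G] (ρ : G →* GL ι K) {w : ι → K} (hw : w ≠ 0)
    (h : ∀ g, ∃ c : K, (ρ g : Matrix ι ι K) *ᵥ w = c • w) :
    ∃ χ : G →* Kˣ, ∀ g, (ρ g : Matrix ι ι K) *ᵥ w = (χ g : K) • w := by
  choose c hc using h
  have huniq := smul_left_injective K hw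
  let χ : G →* K :=
    { toFun := c
      map_one' := huniq <| by simp [← hc 1]
      map_mul' := fun a b => huniq <| by
        dsimp only
        rw [← hc, map_mul, Units.val_mul, ← mulVec_mulVec, hc b, mulVec_smul, hc a, smul_smul,
          mul_comm] }
  exact ⟨χ.toHomUnits, hc⟩

theorem eq_zero_of_sq_eq_zero_of_smul_eq_smul_one {M : Matrix ι ι K} {s t : K} (hs : s ≠ 0)
    (hM : M ^ 2 = 0) (h : s • M = t • 1) : M = 0 := by
  have htM : t • M = 0 := by
    rw [sq] at hM
    simpa [smul_mul_assoc, hM] using (congrArg (· * M) h).symm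
  rcases eq_or_ne t 0 with rfl | ht
  · simpa [hs] using h
  · simpa [ht] using htM

theorem eq_smul_one_of_sub_sq_eq_zero {A : Matrix ι ι K} {c a : K} {m : ℕ} (hc : c ≠ 0)
    (hm : (m : K) ≠ 0) (hA : (A - c • 1) ^ 2 = 0) (hpow : A ^ m = a • 1) : A = c • 1 := by
  obtain ⟨M, hMdef⟩ : ∃ M, M = c⁻¹ • (A - c • 1) := ⟨_, rfl⟩
  have hM : M ^ 2 = 0 := by simp [hMdef, smul_pow, hA]
  have hAM : A = c • (1 + M) := by simp [hMdef, smul_add, smul_smul, hc]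
  have h1 : 1 + (m : K) • M = (a / c ^ m) • 1 := by
    rw [hAM, smul_pow, one_add_pow_of_sq_eq_zero hM, ← Nat.cast_smul_eq_nsmul K] at hpow
    rw [div_eq_inv_mul, mul_smul, ← hpow, smul_smul, inv_mul_cancel₀ (pow_ne_zero m hc),
      one_smul]
  have hmM : (m : K) • M = (a / c ^ m - 1) • 1 := by
    rw [sub_smul, one_smul, ← h1, add_sub_cancel_left]
  simpa [hMdef, hc, sub_eq_zero] using eq_zero_of_sq_eq_zero_of_smul_eq_smul_one hm hM hmM

theorem eq_smul_one_of_forall_mulVec_basis {κ : Type*} (b : Module.Basis κ K (ι → K))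
    {A : Matrix ι ι K} {c : K} (hA : ∀ k, A *ᵥ b k = c • b k) : A = c • 1 :=
  toLin'.injective <| b.ext fun k => by simp [hA]

theorem sq_eq_zero_of_trace_eq_zero_of_det_eq_zero {N : Matrix (Fin 2) (Fin 2) K}
    (htr : N.trace = 0) (hdet : N.det = 0) : N ^ 2 = 0 := by
  have := N.aeval_self_charpoly
  rw [charpoly_fin_two] at this
  simpa [htr, hdet] using this

theorem sub_smul_one_sq_eq_zero_of_det_eq_sq {A : Matrix (Fin 2) (Fin 2) K} {w : Fin 2 → K}
    {c : K} (hc : c ≠ 0) (hw : w ≠ 0) (hAw : A *ᵥ w = c • w) (hdet : A.det = c ^ 2) :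
    (A - c • 1) ^ 2 = 0 := by
  have hN : (A - c • 1).det = 0 := exists_mulVec_eq_zero_iff.mp
    ⟨w, hw, by rw [sub_mulVec, hAw, smul_mulVec, one_mulVec, sub_self]⟩
  refine sq_eq_zero_of_trace_eq_zero_of_det_eq_zero ?_ hN
  rw [det_fin_two] at hN hdet
  simp only [trace_fin_two, sub_apply, smul_apply, smul_eq_mul, one_apply_eq,
    one_apply_ne zero_ne_one, one_apply_ne one_ne_zero, mul_zero, sub_zero, mul_one] at hN ⊢
  apply mul_left_cancel₀ hc
  linear_combination hdet - hN

theorem eq_smul_one_of_linearIndependent {A : Matrix (Fin 2) (Fin 2) K} {w u : Fin 2 → K} {c : K}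
    (hind : LinearIndependent K ![w, u]) (hw : A *ᵥ w = c • w) (hu : A *ᵥ u = c • u) :
    A = c • 1 :=
  eq_smul_one_of_forall_mulVec_basis (basisOfLinearIndependentOfCardEqFinrank hind (by simp))
    (by rw [coe_basisOfLinearIndependentOfCardEqFinrank]; exact Fin.forall_fin_two.mpr ⟨hw, hu⟩)

theorem GeneralLinearGroup.mem_center_iff_eigenvalue_sq_eq_det {g : GL (Fin 2) K}
    {w : Fin 2 → K} {c : K} {m : ℕ} (hm : (m : K) ≠ 0)
    (hgm : g ^ m ∈ Subgroup.center (GL (Fin 2) K)) (hw : w ≠ 0)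
    (hgw : (g : Matrix (Fin 2) (Fin 2) K) *ᵥ w = c • w) :
    g ∈ Subgroup.center (GL (Fin 2) K) ↔ c ^ 2 = (g : Matrix (Fin 2) (Fin 2) K).det := by
  rw [mem_center_iff_exists_eq_smul_one]
  constructor
  · rintro ⟨a, ha⟩
    have hca : c • w = a • w := by rw [← hgw, ha, smul_mulVec, one_mulVec]
    simp [ha, smul_left_injective K hw hca]
  · intro hdet
    have hc : c ≠ 0 := by
      rintro rfl
      exact det_ne_zero g (by simp [← hdet])
    obtain ⟨a, ha⟩ := mem_center_iff_exists_eq_smul_one.mp hgm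
    exact ⟨c, eq_smul_one_of_sub_sq_eq_zero hc hm
      (sub_smul_one_sq_eq_zero_of_det_eq_sq hc hw hgw hdet.symm) (by simpa using ha)⟩

end Matrix

section Frobenius

variable {F L : Type*} [Field F] [Fintype F] [Field L] [Algebra F L] [Finite L]

open FiniteField

theorem FiniteField.exists_map_eq_smul_of_frobenius_comp_eq_smul {ι : Type*} {w : ι → L}
    (hw : w ≠ 0) {a : L} (ha : frobeniusAlgHom F L ∘ w = a • w) :
    ∃ v : ι → F, v ≠ 0 ∧ ∃ b : L, algebraMap F L ∘ v = b • w := by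
  obtain ⟨i, hi⟩ : ∃ i, w i ≠ 0 := Function.ne_iff.mp hw
  have hσi : frobeniusAlgHom F L (w i) = a * w i := congrFun ha i
  have ha0 : a ≠ 0 := by
    rintro rfl
    exact (map_ne_zero (frobeniusAlgHom F L)).mpr hi (by simpa using hσi)
  -- normalising the `i`-th coordinate to `1` turns the Frobenius-stable line into a fixed vector
  have hfix : ∀ j, ((w i)⁻¹ * w j) ^ Fintype.card F = (w i)⁻¹ * w j := fun j => by
    have hσj : frobeniusAlgHom F L (w j) = a * w j := congrFun ha j
    change frobeniusAlgHom F L _ = _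
    rw [map_mul, map_inv₀, hσi, hσj]
    field_simp
  choose v hv using fun j => mem_range_algebraMap_of_pow_card_eq (hfix j)
  refine ⟨v, fun hv0 => ?_, (w i)⁻¹, funext hv⟩
  simpa [hv0, hi] using hv i

theorem exists_commonEigenvector_of_not_linearIndependent {H : Subgroup (GL (Fin 2) F)}
    {w : Fin 2 → L} (hw : w ≠ 0)
    (hH : ∀ g ∈ H, ∃ c : L, (g : Matrix (Fin 2) (Fin 2) F).map (algebraMap F L) *ᵥ w = c • w)
    (hdep : ¬ LinearIndependent L ![w, frobeniusAlgHom F L ∘ w]) :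
    ∃ v : Fin 2 → F, v ≠ 0 ∧ ∀ g ∈ H, ∃ c : F, (g : Matrix (Fin 2) (Fin 2) F) *ᵥ v = c • v := by
  obtain ⟨a, ha⟩ : ∃ a : L, a • w = frobeniusAlgHom F L ∘ w := by
    simpa [LinearIndependent.pair_iff' hw] using hdep
  obtain ⟨v, hv, b, hvw⟩ := exists_map_eq_smul_of_frobenius_comp_eq_smul hw ha.symm
  refine ⟨v, hv, fun g hg => ?_⟩
  obtain ⟨c, hc⟩ := hH g hg
  exact exists_mulVec_eq_smul_of_map (algebraMap F L) hv (by rw [hvw, mulVec_smul, hc, smul_comm])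

theorem Matrix.GeneralLinearGroup.mem_center_iff_eigenvalue_pow_card_sub_one_eq_one
    {g : GL (Fin 2) F} {w : Fin 2 → L} {c : L}
    (hind : LinearIndependent L ![w, frobeniusAlgHom F L ∘ w])
    (hgw : (g : Matrix (Fin 2) (Fin 2) F).map (algebraMap F L) *ᵥ w = c • w) :
    g ∈ Subgroup.center (GL (Fin 2) F) ↔ c ^ (Fintype.card F - 1) = 1 := by
  rw [mem_center_iff_exists_eq_smul_one]
  constructor
  · rintro ⟨a, ha⟩
    have ha0 : a ≠ 0 := by
      rintro rfl
      exact det_ne_zero g (by simp [ha])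
    have hca : c • w = algebraMap F L a • w := by
      rw [← hgw, ha, map_smul_one, smul_mulVec, one_mulVec]
    rw [smul_left_injective L (hind.ne_zero 0) hca, ← map_pow, pow_card_sub_one_eq_one a ha0,
      map_one]
  · intro hc1
    have hcq : frobeniusAlgHom F L c = c := by
      change c ^ Fintype.card F = c
      rw [← Nat.sub_add_cancel Fintype.card_pos, pow_succ, hc1, one_mul]
    have hgσw := (mulVec_comp_algHom _ hgw).trans (by rw [hcq])
    obtain ⟨a, rfl⟩ := mem_range_algebraMap_of_pow_card_eq hcq
    exact ⟨a, Matrix.map_injective (algebraMap F L).injective <|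
      (eq_smul_one_of_linearIndependent hind hgw hgσw).trans (map_smul_one _ a).symm⟩

end Frobenius

theorem isCyclic_map_mk_center_and_card_dvd_card_sub_one {F : Type*} [Field F] [Fintype F]
    {H : Subgroup (GL (Fin 2) F)}
    (hn : (Nat.card (H.map (QuotientGroup.mk' (Subgroup.center (GL (Fin 2) F)))) : F) ≠ 0)
    {w : Fin 2 → F} (hw : w ≠ 0)
    (hH : ∀ g ∈ H, ∃ c : F, (g : Matrix (Fin 2) (Fin 2) F) *ᵥ w = c • w) :
    IsCyclic (H.map (QuotientGroup.mk' (Subgroup.center (GL (Fin 2) F)))) ∧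
      Nat.card (H.map (QuotientGroup.mk' (Subgroup.center (GL (Fin 2) F)))) ∣
        Fintype.card F - 1 := by
  obtain ⟨c, hc⟩ := exists_eigencharacter H.subtype hw fun g => hH g g.2
  let χ : H →* Fˣ := c ^ 2 / GeneralLinearGroup.det.comp H.subtype
  have hχ : ∀ g : H, (g : GL (Fin 2) F) ∈ Subgroup.center (GL (Fin 2) F) ↔ χ g = 1 := fun g => by
    rw [GeneralLinearGroup.mem_center_iff_eigenvalue_sq_eq_det hn
      (Subgroup.pow_card_map_mk'_mem _ g.2) hw (hc g)]
    simp [χ, div_eq_one, Units.ext_iff]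
  let e := QuotientGroup.mapMkEquivRange _ H χ hχ
  refine ⟨isCyclic_of_surjective e.symm.toMonoidHom e.symm.surjective, ?_⟩
  rw [Nat.card_congr e.toEquiv, ← Nat.card_eq_fintype_card, ← Nat.card_units]
  exact Subgroup.card_subgroup_dvd_card _

theorem card_map_mk_center_dvd_card_add_one {F L : Type*} [Field F] [Fintype F] [Field L]
    [Algebra F L] (hL : Module.finrank F L = 2) {H : Subgroup (GL (Fin 2) F)}
    (hF : ¬ ∃ v : Fin 2 → F, v ≠ 0 ∧ ∀ g ∈ H, ∃ c : F, (g : Matrix (Fin 2) (Fin 2) F) *ᵥ v = c • v)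
    {w : Fin 2 → L} (hw : w ≠ 0)
    (hH : ∀ g ∈ H, ∃ c : L, (g : Matrix (Fin 2) (Fin 2) F).map (algebraMap F L) *ᵥ w = c • w) :
    Nat.card (H.map (QuotientGroup.mk' (Subgroup.center (GL (Fin 2) F)))) ∣
      Fintype.card F + 1 := by
  have : Module.Finite F L := Module.finite_of_finrank_eq_succ hL
  have : Finite L := Module.finite_of_finite F
  have hind : LinearIndependent L ![w, FiniteField.frobeniusAlgHom F L ∘ w] := by
    by_contra hdep
    exact hF (exists_commonEigenvector_of_not_linearIndependent hw hH hdep)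
  obtain ⟨c, hc⟩ := exists_eigencharacter
    ((GeneralLinearGroup.map (algebraMap F L)).comp H.subtype) hw fun g => hH g g.2
  let χ : H →* Lˣ := c ^ (Fintype.card F - 1)
  have hχ : ∀ g : H, (g : GL (Fin 2) F) ∈ Subgroup.center (GL (Fin 2) F) ↔ χ g = 1 := fun g => by
    have hgw : ((g : GL (Fin 2) F) : Matrix (Fin 2) (Fin 2) F).map (algebraMap F L) *ᵥ w =
        (c g : L) • w := hc g
    rw [GeneralLinearGroup.mem_center_iff_eigenvalue_pow_card_sub_one_eq_one hind hgw]
    simp [χ, Units.ext_iff]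
  let e := QuotientGroup.mapMkEquivRange _ H χ hχ
  rw [Nat.card_congr e.toEquiv, ← IsCyclic.exponent_eq_card]
  refine Monoid.exponent_dvd_of_forall_pow_eq_one fun ⟨_, g, rfl⟩ => Subtype.ext ?_
  have hcardL : Nat.card Lˣ = (Fintype.card F + 1) * (Fintype.card F - 1) := by
    rw [Nat.card_units, Module.natCard_eq_pow_finrank (K := F), hL, Nat.card_eq_fintype_card]
    simpa using Nat.sq_sub_sq (Fintype.card F) 1
  simp [χ, ← pow_mul, mul_comm, ← hcardL, pow_card_eq_one']

theorem stmt_2_general (p h : ℕ) [Fact p.Prime]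
    (F : Type) [Field F] [Fintype F] (hF : Fintype.card F = p ^ h)
    (L : Type) [Field L] [Algebra F L] (hL : Module.finrank F L = 2)
    (H : Subgroup (GL (Fin 2) F))
    (n : ℕ) (hn : Nat.card (H.map (QuotientGroup.mk' (Subgroup.center (GL (Fin 2) F)))) = n)
    (hnp : Nat.Coprime n p) :
    ((∃ w : Fin 2 → F, w ≠ 0 ∧ ∀ g ∈ H, ∃ c : F,
        (g : Matrix (Fin 2) (Fin 2) F) *ᵥ w = c • w) →
      IsCyclic (H.map (QuotientGroup.mk' (Subgroup.center (GL (Fin 2) F)))) ∧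
        n ∣ p ^ h - 1) ∧
    ((¬ ∃ w : Fin 2 → F, w ≠ 0 ∧ ∀ g ∈ H, ∃ c : F,
        (g : Matrix (Fin 2) (Fin 2) F) *ᵥ w = c • w) →
      (∃ w : Fin 2 → L, w ≠ 0 ∧ ∀ g ∈ H, ∃ c : L,
        ((g : Matrix (Fin 2) (Fin 2) F).map (algebraMap F L)) *ᵥ w = c • w) →
      n ∣ p ^ h + 1) := by
  have : CharP F p := charP_of_card_eq_prime_pow hF
  have hnF : (n : F) ≠ 0 := by
    rw [Ne, CharP.cast_eq_zero_iff F p]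
    exact fun hpn => (Fact.out : p.Prime).ne_one (hnp.symm.eq_one_of_dvd hpn)
  subst hn
  rw [← hF]
  exact ⟨fun ⟨w, hw, hH⟩ => isCyclic_map_mk_center_and_card_dvd_card_sub_one hnF hw hH,
    fun hnoF ⟨w, hw, hH⟩ => card_map_mk_center_dvd_card_add_one hL hnoF hw hH⟩

/-- Let `q = p^h` with `p` an odd prime, and let `H ≤ GL(2, F_q)` contain
all scalar matrices (equivalently, the center), with image `C` in `PGL(2, F_q)` of order `n`
prime to `p`.  (i) If the elements of `H` have a common eigenvector over `F_q`, then `C` is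
cyclic and `n ∣ q − 1`.  (ii) If they have no common eigenvector over `F_q` but have a common
eigenvector over a quadratic extension `L` of `F_q`, then `n ∣ q + 1`. -/
theorem stmt_2 (p h : ℕ) [Fact p.Prime] (hp2 : p ≠ 2) (hh : 0 < h)
    (F : Type) [Field F] [Fintype F] (hF : Fintype.card F = p ^ h)
    (L : Type) [Field L] [Algebra F L] (hL : Module.finrank F L = 2)
    (H : Subgroup (GL (Fin 2) F)) (hHc : Subgroup.center (GL (Fin 2) F) ≤ H)
    (n : ℕ) (hn : Nat.card (H.map (QuotientGroup.mk' (Subgroup.center (GL (Fin 2) F)))) = n)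
    (hnp : Nat.Coprime n p) :
    ((∃ w : Fin 2 → F, w ≠ 0 ∧ ∀ g ∈ H, ∃ c : F,
        (g : Matrix (Fin 2) (Fin 2) F) *ᵥ w = c • w) →
      IsCyclic (H.map (QuotientGroup.mk' (Subgroup.center (GL (Fin 2) F)))) ∧
        n ∣ p ^ h - 1) ∧
    ((¬ ∃ w : Fin 2 → F, w ≠ 0 ∧ ∀ g ∈ H, ∃ c : F,
        (g : Matrix (Fin 2) (Fin 2) F) *ᵥ w = c • w) →
      (∃ w : Fin 2 → L, w ≠ 0 ∧ ∀ g ∈ H, ∃ c : L,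
        ((g : Matrix (Fin 2) (Fin 2) F).map (algebraMap F L)) *ᵥ w = c • w) →
      n ∣ p ^ h + 1) :=
  stmt_2_general p h F hF L hL H n hn hnp
end

section
/- Suppose η is a K-algebra automorphism of F and α, β ∈ K are nonzero elements such that η(x) = α·x and η(y) = β·y⁻¹. Then a = 1, α^n = −1 and β^m = 1. -/
noncomputable section

open MvPolynomial

/-- The bivariate polynomial `a·Xⁿ·Yᵐ + Xⁿ + Yᵐ − 1` over `K` (with `X = X 0`, `Y = X 1`). -/
abbrev curvePoly (K : Type) [Field K] (n m : ℕ) (a : K) : MvPolynomial (Fin 2) K :=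
  C a * X 0 ^ n * X 1 ^ m + X 0 ^ n + X 1 ^ m - 1

/-- The coordinate ring `K[X,Y]/(a·Xⁿ·Yᵐ + Xⁿ + Yᵐ − 1)`. -/
abbrev CurveRing (K : Type) [Field K] (n m : ℕ) (a : K) : Type :=
  MvPolynomial (Fin 2) K ⧸ Ideal.span {curvePoly K n m a}

/-- The images of the coordinates `X`, `Y` in a fraction field `F` of the coordinate ring. -/
def curveGen (K : Type) [Field K] (n m : ℕ) (a : K) (F : Type) [Field F]
    [Algebra (CurveRing K n m a) F] (j : Fin 2) : F :=
  algebraMap (CurveRing K n m a) F (Ideal.Quotient.mk _ (X j))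

/-! Applying `η` to the relation `a xⁿ yᵐ + xⁿ + yᵐ = 1` and multiplying by `yᵐ` shows that
`f = a XⁿYᵐ + Xⁿ + Yᵐ − 1` divides `g = αⁿ XⁿYᵐ + a αⁿβᵐ Xⁿ − Yᵐ + βᵐ`. In `K[X][Y]` both are of
the form `A Yᵐ + B` with `A` of degree `n` in `X`, so degree counting forces `g = c f` for a
constant `c`. Comparing coefficients gives `c = −1`, `βᵐ = 1`, `αⁿ = −a` and `a² = 1`. Finally
`a = −1` is excluded by primality: then `f = −(Xⁿ − 1)(Yᵐ − 1)`, and `f` divides neither factor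
(for `Yᵐ − 1` by the symmetry `X ↔ Y`). -/

namespace Polynomial

variable {R : Type*} [Semiring R] {k : ℕ} {a b a' b' : R} {q : R[X]}

theorem C_mul_X_pow_add_C_ne_zero (hk : k ≠ 0) (hb : b ≠ 0) : C a * X ^ k + C b ≠ 0 := fun h =>
  hb (by simpa [Ne.symm hk] using congrArg (coeff · 0) h)

theorem exists_eq_C_of_C_mul_X_pow_add_C_eq_mul [NoZeroDivisors R] (hk : k ≠ 0) (ha' : a' ≠ 0)
    (h : C a * X ^ k + C b = (C a' * X ^ k + C b') * q) :
    ∃ c, q = C c ∧ a = a' * c ∧ b = b' * c := by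
  have hdeg' : (C a' * X ^ k + C b').natDegree = k := by
    rw [natDegree_add_C, natDegree_C_mul_X_pow k a' ha']
  have hq : q.natDegree = 0 := by
    rcases eq_or_ne q 0 with rfl | hq
    · exact natDegree_zero
    have hne : C a' * X ^ k + C b' ≠ 0 := by
      rintro h0; rw [h0, natDegree_zero] at hdeg'; exact hk hdeg'.symm
    have := congrArg natDegree h
    rw [natDegree_mul hne hq, hdeg', natDegree_add_C] at this
    have := natDegree_C_mul_X_pow_le a k
    omega
  obtain ⟨c, rfl⟩ : ∃ c, q = C c := ⟨_, eq_C_of_natDegree_eq_zero hq⟩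
  refine ⟨c, rfl, ?_, ?_⟩
  · simpa [coeff_C, hk] using congrArg (coeff · k) h
  · simpa [Ne.symm hk] using congrArg (coeff · 0) h

end Polynomial

section Curve

variable {K : Type} [Field K] {n m : ℕ} {a : K}

/-- `K[X, Y] ≅ K[X][Y]`, with `Y = X 1` the outer variable. -/
def toPolyPoly : MvPolynomial (Fin 2) K →ₐ[K] Polynomial (Polynomial K) :=
  aeval ![Polynomial.C Polynomial.X, Polynomial.X]

theorem toPolyPoly_binomial (u v w z : K) :
    toPolyPoly (C u * X 0 ^ n * X 1 ^ m + C v * X 0 ^ n + C w * X 1 ^ m + C z) =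
      Polynomial.C (Polynomial.C u * Polynomial.X ^ n + Polynomial.C w) * Polynomial.X ^ m +
        Polynomial.C (Polynomial.C v * Polynomial.X ^ n + Polynomial.C z) := by
  simp only [toPolyPoly, map_add, map_mul, map_pow, algHom_C, Polynomial.algebraMap_apply,
    Polynomial.algebraMap_eq, aeval_X, Matrix.cons_val_zero, Matrix.cons_val_one,
    Matrix.cons_val_fin_one]
  ring

theorem curvePoly_eq_sum_C_mul :
    curvePoly K n m a = C a * X 0 ^ n * X 1 ^ m + C 1 * X 0 ^ n + C 1 * X 1 ^ m + C (-1) := by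
  simp only [curvePoly, map_one, map_neg]
  ring

theorem curvePoly_not_dvd_X_zero_pow_sub_one (hn : n ≠ 0) (hm : m ≠ 0) :
    ¬ curvePoly K n m a ∣ X 0 ^ n - 1 := by
  rintro ⟨q, hq⟩
  have hX : (X 0 ^ n - 1 : MvPolynomial (Fin 2) K) =
      C 0 * X 0 ^ n * X 1 ^ m + C 1 * X 0 ^ n + C 0 * X 1 ^ m + C (-1) := by
    simp only [map_zero, map_one, map_neg]
    ring
  have h := congrArg toPolyPoly hq
  rw [hX, curvePoly_eq_sum_C_mul, map_mul, toPolyPoly_binomial, toPolyPoly_binomial] at h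
  have hlead : Polynomial.C a * Polynomial.X ^ n + Polynomial.C 1 ≠ 0 :=
    Polynomial.C_mul_X_pow_add_C_ne_zero hn one_ne_zero
  obtain ⟨c, -, h0, h1⟩ := Polynomial.exists_eq_C_of_C_mul_X_pow_add_C_eq_mul hm hlead h
  obtain rfl : c = 0 := (mul_eq_zero.mp (h0.symm.trans (by simp))).resolve_left hlead
  exact Polynomial.C_mul_X_pow_add_C_ne_zero hn (by simp) (h1.trans (mul_zero _))

theorem curvePoly_not_dvd_X_one_pow_sub_one (hn : n ≠ 0) (hm : m ≠ 0) :
    ¬ curvePoly K n m a ∣ X 1 ^ m - 1 := by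
  intro h
  apply curvePoly_not_dvd_X_zero_pow_sub_one (a := a) hm hn
  have hswap := map_dvd (rename (Equiv.swap (0 : Fin 2) 1)) h
  convert hswap using 1
  · simp only [curvePoly, map_sub, map_add, map_mul, map_pow, map_one, algHom_C, algebraMap_eq,
      rename_X, Equiv.swap_apply_left, Equiv.swap_apply_right]
    ring
  · simp

theorem not_isPrime_span_curvePoly_neg_one (hn : n ≠ 0) (hm : m ≠ 0) :
    ¬ (Ideal.span {curvePoly K n m (-1)}).IsPrime := by
  intro hP
  have hfactor : (X 0 ^ n - 1) * (X 1 ^ m - 1) ∈ Ideal.span {curvePoly K n m (-1)} :=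
    Ideal.mem_span_singleton.mpr ⟨-1, by simp only [curvePoly, map_neg, map_one]; ring⟩
  rcases hP.mem_or_mem hfactor with h | h
  · exact curvePoly_not_dvd_X_zero_pow_sub_one hn hm (Ideal.mem_span_singleton.mp h)
  · exact curvePoly_not_dvd_X_one_pow_sub_one hn hm (Ideal.mem_span_singleton.mp h)

theorem eq_of_curvePoly_dvd (hn : n ≠ 0) (hm : m ≠ 0) (ha : a ≠ 0) {u v w : K}
    (h : curvePoly K n m a ∣ C u * X 0 ^ n * X 1 ^ m + C v * X 0 ^ n - X 1 ^ m + C w) :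
    u = -a ∧ v = -1 ∧ w = 1 := by
  obtain ⟨q, hq⟩ := h
  have hg : (C u * X 0 ^ n * X 1 ^ m + C v * X 0 ^ n - X 1 ^ m + C w : MvPolynomial (Fin 2) K) =
      C u * X 0 ^ n * X 1 ^ m + C v * X 0 ^ n + C (-1) * X 1 ^ m + C w := by
    simp only [map_neg, map_one]
    ring
  have h := congrArg toPolyPoly hq
  rw [hg, curvePoly_eq_sum_C_mul, map_mul, toPolyPoly_binomial, toPolyPoly_binomial] at h
  have hlead : Polynomial.C a * Polynomial.X ^ n + Polynomial.C 1 ≠ 0 :=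
    Polynomial.C_mul_X_pow_add_C_ne_zero hn one_ne_zero
  obtain ⟨p, -, hY, hconst⟩ := Polynomial.exists_eq_C_of_C_mul_X_pow_add_C_eq_mul hm hlead h
  obtain ⟨c, rfl, hu, hc⟩ := Polynomial.exists_eq_C_of_C_mul_X_pow_add_C_eq_mul hn ha hY
  obtain ⟨c', hc', hv, hw⟩ := Polynomial.exists_eq_C_of_C_mul_X_pow_add_C_eq_mul hn one_ne_zero hconst
  obtain rfl := Polynomial.C_inj.mp hc'
  obtain rfl : c = -1 := by linear_combination -hc
  exact ⟨by linear_combination hu, by linear_combination hv, by linear_combination hw⟩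

end Curve

section FunctionField

variable (K : Type) [Field K] (n m : ℕ) (a : K) (F : Type) [Field F] [Algebra K F]
  [Algebra (CurveRing K n m a) F] [IsScalarTower K (CurveRing K n m a) F]
  [IsFractionRing (CurveRing K n m a) F]

theorem aeval_curveGen_eq_zero_iff (p : MvPolynomial (Fin 2) K) :
    aeval (curveGen K n m a F) p = 0 ↔ curvePoly K n m a ∣ p := by
  have hfactor : aeval (curveGen K n m a F) =
      (IsScalarTower.toAlgHom K (CurveRing K n m a) F).comp (Ideal.Quotient.mkₐ K _) :=
    algHom_ext fun _ => by simp [curveGen]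
  rw [hfactor, AlgHom.comp_apply, IsScalarTower.coe_toAlgHom',
    map_eq_zero_iff _ (IsFractionRing.injective _ _), Ideal.Quotient.mkₐ_eq_mk,
    Ideal.Quotient.eq_zero_iff_mem, Ideal.mem_span_singleton]

theorem curveGen_relation :
    algebraMap K F a * curveGen K n m a F 0 ^ n * curveGen K n m a F 1 ^ m +
      curveGen K n m a F 0 ^ n + curveGen K n m a F 1 ^ m - 1 = 0 := by
  simpa using (aeval_curveGen_eq_zero_iff K n m a F (curvePoly K n m a)).mpr dvd_rfl

theorem curveGen_one_ne_zero (hn : n ≠ 0) (hm : m ≠ 0) : curveGen K n m a F 1 ≠ 0 := by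
  intro hy
  apply curvePoly_not_dvd_X_zero_pow_sub_one (a := a) hn hm
  rw [← aeval_curveGen_eq_zero_iff K n m a F]
  simpa [hy, hm] using curveGen_relation K n m a F

theorem curvePoly_dvd_of_algEquiv (hn : n ≠ 0) (hm : m ≠ 0) (η : F ≃ₐ[K] F) {α β : K}
    (hηx : η (curveGen K n m a F 0) = algebraMap K F α * curveGen K n m a F 0)
    (hηy : η (curveGen K n m a F 1) = algebraMap K F β * (curveGen K n m a F 1)⁻¹) :
    curvePoly K n m a ∣
      C (α ^ n) * X 0 ^ n * X 1 ^ m + C (a * α ^ n * β ^ m) * X 0 ^ n - X 1 ^ m + C (β ^ m) := by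
  have hy := curveGen_one_ne_zero K n m a F hn hm
  have hrel := congrArg η (curveGen_relation K n m a F)
  rw [← aeval_curveGen_eq_zero_iff K n m a F]
  set x := curveGen K n m a F 0
  set y := curveGen K n m a F 1
  simp only [map_sub, map_add, map_mul, map_pow, map_one, map_zero, AlgEquiv.commutes,
    hηx, hηy] at hrel
  simp only [map_sub, map_add, map_mul, map_pow, aeval_C, aeval_X]
  have hyy : y ^ m * y⁻¹ ^ m = 1 := by rw [← mul_pow, mul_inv_cancel₀ hy, one_pow]
  linear_combination y ^ m * hrel -
    (algebraMap K F a * algebraMap K F α ^ n * algebraMap K F β ^ m * x ^ n +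
      algebraMap K F β ^ m) * hyy

end FunctionField

theorem stmt_5_general (K : Type) [Field K]
    (n m : ℕ) (hn : 1 ≤ n) (hm : 1 ≤ m) (a : K) (ha : a ≠ 0)
    (hprime : (Ideal.span {curvePoly K n m a}).IsPrime)
    (F : Type) [Field F] [Algebra K F] [Algebra (CurveRing K n m a) F]
    [IsScalarTower K (CurveRing K n m a) F] [IsFractionRing (CurveRing K n m a) F]
    (η : F ≃ₐ[K] F) (α β : K)
    (hηx : η (curveGen K n m a F 0) = algebraMap K F α * curveGen K n m a F 0)
    (hηy : η (curveGen K n m a F 1) = algebraMap K F β * (curveGen K n m a F 1)⁻¹) :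
    a = 1 ∧ α ^ n = -1 ∧ β ^ m = 1 := by
  have hn0 : n ≠ 0 := by omega
  have hm0 : m ≠ 0 := by omega
  obtain ⟨hα, hprod, hβ⟩ :=
    eq_of_curvePoly_dvd hn0 hm0 ha (curvePoly_dvd_of_algEquiv K n m a F hn0 hm0 η hηx hηy)
  have hsq : (a - 1) * (a + 1) = 0 := by
    rw [hα, hβ] at hprod
    linear_combination -hprod
  have ha1 : a = 1 := by
    rcases mul_eq_zero.mp hsq with h | h
    · linear_combination h
    · rw [eq_neg_of_add_eq_zero_left h] at hprime
      exact absurd hprime (not_isPrime_span_curvePoly_neg_one hn0 hm0)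
  exact ⟨ha1, by rw [hα, ha1], hβ⟩

/-- With `F` the function field of `a·Xⁿ·Yᵐ + Xⁿ + Yᵐ = 1` over a field `K`
of characteristic `≠ 2`, if `η` is a `K`-automorphism of `F` with `η(x) = α·x` and
`η(y) = β·y⁻¹` for nonzero `α, β ∈ K`, then `a = 1`, `αⁿ = −1` and `βᵐ = 1`. -/
theorem stmt_5 (K : Type) [Field K] (hchar : ringChar K ≠ 2)
    (n m : ℕ) (hn : 1 ≤ n) (hm : 1 ≤ m) (a : K) (ha : a ≠ 0)
    (hprime : (Ideal.span {curvePoly K n m a}).IsPrime)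
    (F : Type) [Field F] [Algebra K F] [Algebra (CurveRing K n m a) F]
    [IsScalarTower K (CurveRing K n m a) F] [IsFractionRing (CurveRing K n m a) F]
    (η : F ≃ₐ[K] F) (α β : K) (hα : α ≠ 0) (hβ : β ≠ 0)
    (hηx : η (curveGen K n m a F 0) = algebraMap K F α * curveGen K n m a F 0)
    (hηy : η (curveGen K n m a F 1) = algebraMap K F β * (curveGen K n m a F 1)⁻¹) :
    a = 1 ∧ α ^ n = -1 ∧ β ^ m = 1 :=
  stmt_5_general K n m hn hm a ha hprime F η α β hηx hηy
end
end
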